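/- Let G=(V,E) be a finite connected undirected graph with positive conductances and marked vertex b. Under the probability measure P on two-component spanning forests proportional to weight, the expected number of vertices of the floating component satisfies E(|Σ|) = ℓ*·(|V|/(|V|−1))·R, where ℓ* = κ(G)(|V|−1)/κ₂(G) and R = (1/|V|)·Σ_{v∈V} G_{v,v}. Equivalently, E(|Σ|) = (κ(G)/κ₂(G))·Σ_{v∈V} G_{v,v}. -/

import Mathlib

/-!
The Green function is a ratio of forest weights: `κ · G_{u,v}` is the weight of the 2SFs whose
floating component contains `u` and `v`. To see that this inverts `Δ_D / κ`, apply the Laplacian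
at `u ≠ b`: only the 2SFs `B` with a neighbour `w` of `u` in the other component contribute, and
adding the edge `uw` maps these pairs bijectively onto pairs (spanning tree `T`, edge `uw ∈ T`).
In a spanning tree exactly one edge at `u` leads towards any given vertex `t ≠ u`, so the
contributions of each tree cancel unless `u = v`. Taking the trace,
`κ · Σ_v G_{v,v} = Σ_B wt B · |Σ(B)| = κ₂ · E(|Σ|)`.
-/

open scoped Classical BigOperators

noncomputable section

namespace TwoSF

variable {V : Type*} [Fintype V] [DecidableEq V]

/-- `u` and `v` are linked by the edges in `B`. -/
def Linked (B : Finset (Sym2 V)) : V → V → Prop :=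
  Relation.ReflTransGen fun a b => s(a, b) ∈ B

/-- The number of connected components of the spanning subgraph `(V, B)`. -/
def ncomp (B : Finset (Sym2 V)) : ℕ :=
  Nat.card (Quot (Linked B))

/-- `B` is a spanning forest of the complete graph on `V` with exactly `k`
connected components: it has `k` components and, by the rank count
`|B| + k = |V|`, it is acyclic (in particular it contains no loop edge).
Taking `k = 1` gives spanning trees, `k = 2` gives two-component spanning
forests (2SF). -/
def IsSF (k : ℕ) (B : Finset (Sym2 V)) : Prop :=
  ncomp B = k ∧ B.card + k = Fintype.card V

/-- The weight of an edge set: the product of its conductances. -/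
def wt (c : Sym2 V → ℝ) (B : Finset (Sym2 V)) : ℝ := ∏ e ∈ B, c e

/-- κ: the weighted sum of spanning trees.  Edge sets containing a non-edge
(an `e` with `c e = 0`) contribute weight `0`, so this is the weighted number
of spanning trees of the graph whose edges are the support of `c`. -/
def kappa1 (c : Sym2 V → ℝ) : ℝ := ∑ B ∈ Finset.univ.filter (IsSF 1), wt c B

/-- κ₂: the weighted sum of two-component spanning forests. -/
def kappa2 (c : Sym2 V → ℝ) : ℝ := ∑ B ∈ Finset.univ.filter (IsSF 2), wt c B

/-- The floating component of `B`: the set of vertices not linked to `b`. -/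
def floating (b : V) (B : Finset (Sym2 V)) : Finset V :=
  Finset.univ.filter fun v => ¬ Linked B b v

/-- The graph Laplacian `Δ` of the graph with conductances `c`. -/
def lap (c : Sym2 V → ℝ) : Matrix V V ℝ := fun u v =>
  if u = v then ∑ w ∈ Finset.univ.filter (· ≠ u), c s(u, w) else -c s(u, v)

/-- The Dirichlet Laplacian `Δ_D`, indexed by `V \ {b}`. -/
def dlap (c : Sym2 V → ℝ) (b : V) : Matrix {w : V // w ≠ b} {w : V // w ≠ b} ℝ :=
  Matrix.of fun p q => lap c p.1 q.1

/-- The Green function with Dirichlet boundary condition at `b` (the inverse of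
the Dirichlet Laplacian), with the convention that it vanishes as soon as one
of its arguments is `b`. -/
def green (c : Sym2 V → ℝ) (b : V) (u v : V) : ℝ :=
  if hu : u = b then 0 else if hv : v = b then 0 else (dlap c b)⁻¹ ⟨u, hu⟩ ⟨v, hv⟩

/-- The probability of the event `p` under the probability measure on
two-component spanning forests assigning to each 2SF a probability
proportional to its weight. -/
def pr2 (c : Sym2 V → ℝ) (p : Finset (Sym2 V) → Prop) : ℝ :=
  (∑ B ∈ Finset.univ.filter (fun B => IsSF 2 B ∧ p B), wt c B) / kappa2 c

/-- The expectation of `((floating b B).card : ℝ) ^ k`, i.e. of `|Σ|^k`, under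
the probability measure on two-component spanning forests proportional to
weight. -/
def expPow (c : Sym2 V → ℝ) (b : V) (k : ℕ) : ℝ :=
  (∑ B ∈ Finset.univ.filter (IsSF 2), wt c B * ((floating b B).card : ℝ) ^ k) / kappa2 c

/-- `|∂Σ|`: the sum of the conductances of the edges having exactly one
endpoint in the floating component of `B`. -/
def bdryWt (c : Sym2 V → ℝ) (b : V) (B : Finset (Sym2 V)) : ℝ :=
  ∑ u ∈ floating b B, ∑ v ∈ (floating b B)ᶜ, c s(u, v)

/-- The expectation of `|∂Σ|` under the probability measure on two-component
spanning forests proportional to weight. -/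
def expBdry (c : Sym2 V → ℝ) (b : V) : ℝ :=
  (∑ B ∈ Finset.univ.filter (IsSF 2), wt c B * bdryWt c b B) / kappa2 c

end TwoSF

namespace TwoSF

open Finset

section Linked

variable {V : Type*} {B B' : Finset (Sym2 V)} {a x y z : V}

lemma linked_refl (B : Finset (Sym2 V)) (x : V) : Linked B x x := .refl

lemma linked_of_mem (h : s(x, y) ∈ B) : Linked B x y := .single h

lemma Linked.symm (h : Linked B x y) : Linked B y x := by
  induction h with
  | refl => exact linked_refl B x
  | tail _ hyz ih => exact .head (by rwa [Sym2.eq_swap]) ih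

lemma Linked.trans (h : Linked B x y) (h' : Linked B y z) : Linked B x z :=
  Relation.ReflTransGen.trans h h'

lemma Linked.mono (hB : B ⊆ B') (h : Linked B x y) : Linked B' x y :=
  Relation.ReflTransGen.mono (fun _ _ hm => hB hm) _ _ h

lemma linked_equivalence (B : Finset (Sym2 V)) : Equivalence (Linked B) :=
  ⟨linked_refl B, Linked.symm, Linked.trans⟩

lemma quot_mk_linked_eq_iff : Quot.mk (Linked B) x = Quot.mk (Linked B) y ↔ Linked B x y := by
  rw [Quot.eq, Equivalence.eqvGen_iff (linked_equivalence B)]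

lemma linked_of_ncomp_eq_one (h : ncomp B = 1) (x y : V) : Linked B x y :=
  quot_mk_linked_eq_iff.mp ((Nat.card_eq_one_iff_unique.mp h).1.elim _ _)

lemma linked_of_ncomp_le_two [Finite V] (h : ncomp B ≤ 2) (hx : ¬ Linked B a x)
    (hy : ¬ Linked B a y) : Linked B x y := by
  by_contra hxy
  let := Fintype.ofFinite (Quot (Linked B))
  have hle := card_le_univ
    ({Quot.mk _ a, Quot.mk _ x, Quot.mk _ y} : Finset (Quot (Linked B)))
  rw [card_insert_of_notMem (by simp [quot_mk_linked_eq_iff, hx, hy]),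
    card_insert_of_notMem (by simpa [quot_mk_linked_eq_iff] using hxy),
    card_singleton, ← Nat.card_eq_fintype_card] at hle
  exact absurd (hle.trans h) (by norm_num)

variable [DecidableEq V]

lemma linked_insert_iff :
    Linked (insert s(x, y) B) a z ↔
      Linked B a z ∨ (Linked B a x ∧ Linked B y z) ∨ (Linked B a y ∧ Linked B x z) := by
  constructor
  · intro h
    induction h using Relation.ReflTransGen.head_induction_on with
    | refl => exact Or.inl (linked_refl B z)
    | @head p q hpq _ ih =>
      rcases mem_insert.mp hpq with hxy | hmem
      · rcases Sym2.eq_iff.mp hxy with ⟨rfl, rfl⟩ | ⟨rfl, rfl⟩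
        · rcases ih with h | ⟨-, h⟩ | ⟨-, h⟩
          · exact Or.inr (Or.inl ⟨linked_refl B p, h⟩)
          · exact Or.inr (Or.inl ⟨linked_refl B p, h⟩)
          · exact Or.inl h
        · rcases ih with h | ⟨-, h⟩ | ⟨-, h⟩
          · exact Or.inr (Or.inr ⟨linked_refl B p, h⟩)
          · exact Or.inl h
          · exact Or.inr (Or.inr ⟨linked_refl B p, h⟩)
      · have hpq := linked_of_mem hmem
        rcases ih with h | ⟨h₁, h₂⟩ | ⟨h₁, h₂⟩
        · exact Or.inl (hpq.trans h)
        · exact Or.inr (Or.inl ⟨hpq.trans h₁, h₂⟩)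
        · exact Or.inr (Or.inr ⟨hpq.trans h₁, h₂⟩)
  · have hsub : B ⊆ insert s(x, y) B := subset_insert _ _
    have hxy : Linked (insert s(x, y) B) x y := linked_of_mem (mem_insert_self _ _)
    rintro (h | ⟨h₁, h₂⟩ | ⟨h₁, h₂⟩)
    · exact h.mono hsub
    · exact ((h₁.mono hsub).trans hxy).trans (h₂.mono hsub)
    · exact ((h₁.mono hsub).trans hxy.symm).trans (h₂.mono hsub)

lemma linked_insert_of_linked (hxy : Linked B x y) : Linked (insert s(x, y) B) = Linked B := by
  ext a z
  rw [linked_insert_iff]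
  refine ⟨?_, Or.inl⟩
  rintro (h | ⟨h₁, h₂⟩ | ⟨h₁, h₂⟩)
  · exact h
  · exact (h₁.trans hxy).trans h₂
  · exact (h₁.trans hxy.symm).trans h₂

lemma linked_erase_cases (he : s(x, y) ∈ B) (h : Linked B a z)
    (hnot : ¬ Linked (B.erase s(x, y)) a z) :
    (Linked (B.erase s(x, y)) a x ∧ Linked (B.erase s(x, y)) y z) ∨
      (Linked (B.erase s(x, y)) a y ∧ Linked (B.erase s(x, y)) x z) := by
  rw [← insert_erase he, linked_insert_iff] at h
  exact h.resolve_left hnot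

lemma linked_erase_or_of_not_linked {u w w' t : V} (hu : ¬ Linked B w u) (he : s(u, w') ∈ B)
    (h : Linked B w t) :
    Linked (B.erase s(u, w')) w t ∨ Linked (B.erase s(u, w')) w w' := by
  by_contra! hne
  rcases linked_erase_cases he h hne.1 with ⟨h₁, -⟩ | ⟨h₁, -⟩
  · exact hu (h₁.mono (erase_subset _ _))
  · exact hne.2 h₁

lemma ncomp_insert_of_linked (hxy : Linked B x y) : ncomp (insert s(x, y) B) = ncomp B := by
  rw [ncomp, ncomp, linked_insert_of_linked hxy]

lemma ncomp_erase_of_linked (he : s(x, y) ∈ B) (hxy : Linked (B.erase s(x, y)) x y) :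
    ncomp (B.erase s(x, y)) = ncomp B := by
  rw [← ncomp_insert_of_linked hxy, insert_erase he]

end Linked

section Components

variable {V : Type*} [Fintype V]

lemma ncomp_empty : ncomp (∅ : Finset (Sym2 V)) = Fintype.card V := by
  have hinj : Function.Injective (Quot.mk (Linked (∅ : Finset (Sym2 V)))) := fun a z h =>
    (Relation.reflTransGen_iff_eq (by simp)).mp (quot_mk_linked_eq_iff.mp h) |>.symm
  rw [ncomp, ← Nat.card_eq_fintype_card]
  exact (Nat.card_eq_of_bijective _ ⟨hinj, Quot.mk_surjective⟩).symm

variable [DecidableEq V] {B : Finset (Sym2 V)} {k : ℕ} {x y : V}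

/-- Adding `xy` merges the classes of `x` and `y` and no others, so the classes of the new edge
set correspond to the classes of `B` other than that of `y`. -/
lemma ncomp_insert_of_not_linked (hxy : ¬ Linked B x y) :
    ncomp (insert s(x, y) B) + 1 = ncomp B := by
  set r := Linked B
  set r' := Linked (insert s(x, y) B)
  have hmono : ∀ a z, r a z → r' a z := fun _ _ h => h.mono (subset_insert _ _)
  let f : {q : Quot r // q ≠ Quot.mk r y} → Quot r' := fun q => Quot.map id hmono q.1
  have hinj : Function.Injective f := by
    rintro ⟨q₁, hq₁⟩ ⟨q₂, hq₂⟩ h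
    induction q₁ using Quot.ind with | _ a =>
    induction q₂ using Quot.ind with | _ z =>
    rw [ne_eq, quot_mk_linked_eq_iff] at hq₁ hq₂
    have h' := linked_insert_iff.mp (quot_mk_linked_eq_iff.mp h)
    refine Subtype.ext (quot_mk_linked_eq_iff.mpr ?_)
    rcases h' with h' | ⟨-, h'⟩ | ⟨h', -⟩
    · exact h'
    · exact absurd h'.symm hq₂
    · exact absurd h' hq₁
  have hsurj : Function.Surjective f := by
    intro q
    induction q using Quot.ind with | _ a =>
    by_cases hay : Linked B a y
    · refine ⟨⟨Quot.mk r x, fun h => hxy (quot_mk_linked_eq_iff.mp h)⟩, ?_⟩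
      exact quot_mk_linked_eq_iff.mpr
        ((linked_of_mem (mem_insert_self _ _)).trans (hmono _ _ hay.symm))
    · exact ⟨⟨Quot.mk r a, fun h => hay (quot_mk_linked_eq_iff.mp h)⟩, rfl⟩
  let := Fintype.ofFinite (Quot r)
  have hcompl : Nat.card {q : Quot r // q ≠ Quot.mk r y} + 1 = ncomp B := by
    rw [Nat.card_eq_fintype_card, Fintype.card_subtype_compl, Fintype.card_subtype_eq,
      Nat.sub_add_cancel (Fintype.card_pos_iff.mpr ⟨Quot.mk r y⟩), ncomp,
      Nat.card_eq_fintype_card]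
  rw [ncomp, ← Nat.card_eq_of_bijective f ⟨hinj, hsurj⟩, hcompl]

lemma card_le_card_add_ncomp (B : Finset (Sym2 V)) : Fintype.card V ≤ B.card + ncomp B := by
  induction B using Finset.induction_on with
  | empty => simp [ncomp_empty]
  | @insert e B he ih =>
    induction e using Sym2.ind with | _ x y =>
    rw [card_insert_of_notMem he]
    by_cases hxy : Linked B x y
    · rw [ncomp_insert_of_linked hxy]
      omega
    · have := ncomp_insert_of_not_linked hxy
      omega

lemma card_add_ncomp_of_acyclic (hB : ∀ x y, s(x, y) ∈ B → ¬ Linked (B.erase s(x, y)) x y) :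
    B.card + ncomp B = Fintype.card V := by
  induction B using Finset.induction_on with
  | empty => simp [ncomp_empty]
  | @insert e B he ih =>
    induction e using Sym2.ind with | _ x y =>
    have hxy : ¬ Linked B x y := by
      simpa [erase_insert he] using hB x y (mem_insert_self _ _)
    have hB' : ∀ u w, s(u, w) ∈ B → ¬ Linked (B.erase s(u, w)) u w := fun u w hm h =>
      hB u w (mem_insert_of_mem hm)
        (h.mono (erase_subset_erase _ (subset_insert _ _)))
    have := ncomp_insert_of_not_linked hxy
    rw [card_insert_of_notMem he]
    have := ih hB'
    omega

lemma exists_isSF_one_subset (hB : ncomp B = 1) : ∃ T ⊆ B, IsSF 1 T := by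
  induction B using Finset.strongInduction with | H B ih =>
  by_cases hac : ∀ x y, s(x, y) ∈ B → ¬ Linked (B.erase s(x, y)) x y
  · exact ⟨B, subset_rfl, hB, hB ▸ card_add_ncomp_of_acyclic hac⟩
  · push Not at hac
    obtain ⟨x, y, he, hxy⟩ := hac
    obtain ⟨T, hT, hsf⟩ :=
      ih _ (erase_ssubset he) ((ncomp_erase_of_linked he hxy).trans hB)
    exact ⟨T, hT.trans (erase_subset _ _), hsf⟩

lemma IsSF.not_linked_erase (hB : IsSF k B) (he : s(x, y) ∈ B) :
    ¬ Linked (B.erase s(x, y)) x y := fun hxy => by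
  have := card_le_card_add_ncomp (B.erase s(x, y))
  rw [card_erase_of_mem he, ncomp_erase_of_linked he hxy, hB.1] at this
  have := hB.2
  have := card_pos.mpr ⟨_, he⟩
  omega

lemma IsSF.erase (hB : IsSF k B) (he : s(x, y) ∈ B) : IsSF (k + 1) (B.erase s(x, y)) := by
  have := ncomp_insert_of_not_linked (hB.not_linked_erase he)
  rw [insert_erase he, hB.1] at this
  have := hB.2
  have := card_pos.mpr ⟨_, he⟩
  exact ⟨by omega, by rw [card_erase_of_mem he]; omega⟩

lemma IsSF.insert (hB : IsSF (k + 1) B) (hxy : ¬ Linked B x y) :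
    IsSF k (insert s(x, y) B) := by
  have := ncomp_insert_of_not_linked hxy
  rw [hB.1] at this
  have := hB.2
  refine ⟨by omega, ?_⟩
  rw [card_insert_of_notMem fun he => hxy (linked_of_mem he)]
  omega

end Components

section Neighbours

variable {V : Type*} [DecidableEq V] {B : Finset (Sym2 V)} {u t : V}

lemma exists_mem_linked_erase (h : Linked B u t) (htu : t ≠ u) :
    ∃ w, s(u, w) ∈ B ∧ Linked (B.erase s(u, w)) w t := by
  induction B using Finset.strongInduction with | H B ih =>
  obtain ⟨w, hm, hwt⟩ := (Relation.ReflTransGen.cases_head h).resolve_left (Ne.symm htu)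
  by_cases hwt' : Linked (B.erase s(u, w)) w t
  · exact ⟨w, hm, hwt'⟩
  · have hut : Linked (B.erase s(u, w)) u t := by
      rcases linked_erase_cases hm hwt hwt' with ⟨-, h⟩ | ⟨-, h⟩
      · exact absurd h hwt'
      · exact h
    obtain ⟨w', hm', h'⟩ := ih _ (erase_ssubset hm) hut
    exact ⟨w', mem_of_mem_erase hm',
      h'.mono (erase_subset_erase _ (erase_subset _ _))⟩

variable [Fintype V] {k : ℕ}

/-- Two distinct edges `uw₁`, `uw₂` that both lead from `u` towards `t` would close a cycle. -/
lemma IsSF.eq_of_linked_erase (hB : IsSF k B) {w₁ w₂ : V}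
    (hm₁ : s(u, w₁) ∈ B) (h₁ : Linked (B.erase s(u, w₁)) w₁ t)
    (hm₂ : s(u, w₂) ∈ B) (h₂ : Linked (B.erase s(u, w₂)) w₂ t) : w₁ = w₂ := by
  by_contra hne
  have hb₁ := hB.not_linked_erase hm₁
  have hb₂ := hB.not_linked_erase hm₂
  have hm₂' : s(u, w₂) ∈ B.erase s(u, w₁) :=
    mem_erase.mpr ⟨mt Sym2.congr_right.mp (Ne.symm hne), hm₂⟩
  have hm₁' : s(u, w₁) ∈ B.erase s(u, w₂) :=
    mem_erase.mpr ⟨mt Sym2.congr_right.mp hne, hm₁⟩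
  have hw₁ := linked_erase_or_of_not_linked (fun h => hb₁ h.symm) hm₂' h₁
  have hw₂ := linked_erase_or_of_not_linked (fun h => hb₂ h.symm) hm₁' h₂
  rw [erase_right_comm] at hw₂
  have hw : Linked ((B.erase s(u, w₁)).erase s(u, w₂)) w₁ w₂ := by
    rcases hw₁ with h | h
    · rcases hw₂ with h' | h'
      · exact h.trans h'.symm
      · exact h'.symm
    · exact h
  exact hb₁ ((linked_of_mem hm₂').trans (hw.mono (erase_subset _ _)).symm)

lemma IsSF.card_filter_linked_erase (hB : IsSF 1 B) (u t : V) :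
    (univ.filter fun w => s(u, w) ∈ B ∧ Linked (B.erase s(u, w)) w t).card =
      if t = u then 0 else 1 := by
  split_ifs with htu
  · subst htu
    rw [card_eq_zero, filter_eq_empty_iff]
    rintro w - ⟨hm, h⟩
    exact hB.not_linked_erase hm h.symm
  · obtain ⟨w₀, hm₀, h₀⟩ := exists_mem_linked_erase (linked_of_ncomp_eq_one hB.1 u t) htu
    rw [card_eq_one]
    refine ⟨w₀, ext fun w => ?_⟩
    simp only [mem_filter, mem_univ, true_and, mem_singleton]
    refine ⟨fun ⟨hm, h⟩ => hB.eq_of_linked_erase hm h hm₀ h₀, ?_⟩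
    rintro rfl
    exact ⟨hm₀, h₀⟩

end Neighbours

section Green

variable {V : Type*} [Fintype V] {B T : Finset (Sym2 V)} {u w b : V}

lemma mem_floating_iff_of_linked (h : Linked B u w) :
    u ∈ floating b B ↔ w ∈ floating b B := by
  simp only [floating, mem_filter, mem_univ, true_and]
  exact not_congr ⟨fun h' => h'.trans h, fun h' => h'.trans h.symm⟩

variable [DecidableEq V]

def floatWt (c : Sym2 V → ℝ) (b u v : V) : ℝ :=
  ∑ B ∈ univ.filter (IsSF 2),
    wt c B * if u ∈ floating b B ∧ v ∈ floating b B then 1 else 0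

lemma floatWt_base_left (c : Sym2 V → ℝ) (b v : V) : floatWt c b b v = 0 :=
  sum_eq_zero fun B _ => by simp [floating, linked_refl]

lemma floatWt_base_right (c : Sym2 V → ℝ) (b u : V) : floatWt c b u b = 0 :=
  sum_eq_zero fun B _ => by simp [floating, linked_refl]

lemma sum_lap_mul (c : Sym2 V → ℝ) (f : V → ℝ) (u : V) :
    ∑ w, lap c u w * f w = ∑ w, c s(u, w) * (f u - f w) := by
  have hoff : ∀ w ∈ univ.erase u, lap c u w = -c s(u, w) := fun w hw => by
    simp [lap, Ne.symm (ne_of_mem_erase hw)]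
  calc ∑ w, lap c u w * f w = lap c u u * f u + ∑ w ∈ univ.erase u, lap c u w * f w :=
        (add_sum_erase _ _ (mem_univ u)).symm
    _ = ∑ w ∈ univ.erase u, c s(u, w) * (f u - f w) := by
        rw [lap, if_pos rfl, filter_ne', sum_mul, ← sum_add_distrib]
        exact sum_congr rfl fun w hw => by rw [hoff w hw]; ring
    _ = ∑ w, c s(u, w) * (f u - f w) := sum_erase _ (by simp)

/-- Across a cross edge `uw` of a 2SF exactly one endpoint floats. -/
lemma ite_floating_sub_of_not_linked (hB : IsSF 2 B) (huw : ¬ Linked B u w) (v : V) :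
    ((if u ∈ floating b B ∧ v ∈ floating b B then 1 else 0) -
        if w ∈ floating b B ∧ v ∈ floating b B then 1 else 0 : ℝ) =
      (if Linked B w b then 1 else 0) - if Linked B w v then 1 else 0 := by
  simp only [floating, mem_filter, mem_univ, true_and]
  by_cases hwb : Linked B w b
  · have hbu : ¬ Linked B b u := fun h => huw (h.symm.trans hwb.symm)
    have hv : ¬ Linked B b v ↔ ¬ Linked B w v := not_congr ⟨hwb.trans, hwb.symm.trans⟩
    by_cases hwv : Linked B w v <;> simp [hwb, hbu, hwb.symm, hv, hwv]
  · have hbu : Linked B b u := by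
      by_contra hbu
      exact huw (linked_of_ncomp_le_two hB.1.le hbu fun h => hwb h.symm)
    have hv : ¬ Linked B b v ↔ Linked B w v :=
      ⟨linked_of_ncomp_le_two hB.1.le fun h => hwb h.symm, fun h h' => hwb (h.trans h'.symm)⟩
    have hbw : ¬ Linked B b w := fun h => hwb h.symm
    simp [hwb, hbu, hbw, hv]

/-- Adding a cross edge `uw` to a 2SF `B` gives a spanning tree `T ∋ uw` with `B = T \ uw`. -/
lemma sum_cross_eq_sum_tree (c : Sym2 V → ℝ) (u : V) (F : Finset (Sym2 V) → V → ℝ) :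
    ∑ p ∈ (univ.filter (IsSF 2) ×ˢ univ).filter (fun p => ¬ Linked p.1 u p.2),
      c s(u, p.2) * wt c p.1 * F p.1 p.2 =
    ∑ p ∈ (univ.filter (IsSF 1) ×ˢ univ).filter (fun p => s(u, p.2) ∈ p.1),
      wt c p.1 * F (p.1.erase s(u, p.2)) p.2 := by
  have hnm : ∀ {B w}, ¬ Linked B u w → s(u, w) ∉ B := fun h he => h (linked_of_mem he)
  refine sum_bij' (fun p _ => (insert s(u, p.2) p.1, p.2))
    (fun p _ => (p.1.erase s(u, p.2), p.2)) ?_ ?_ ?_ ?_ ?_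
  · rintro ⟨B, w⟩ hp
    simp only [mem_filter, mem_product, mem_univ, true_and, and_true] at hp ⊢
    exact ⟨hp.1.insert hp.2, mem_insert_self _ _⟩
  · rintro ⟨T, w⟩ hp
    simp only [mem_filter, mem_product, mem_univ, true_and, and_true] at hp ⊢
    exact ⟨hp.1.erase hp.2, hp.1.not_linked_erase hp.2⟩
  · rintro ⟨B, w⟩ hp
    simp only [mem_filter] at hp
    simp [erase_insert (hnm hp.2)]
  · rintro ⟨T, w⟩ hp
    simp only [mem_filter] at hp
    simp [insert_erase hp.2]
  · rintro ⟨B, w⟩ hp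
    simp only [mem_filter] at hp
    simp only [wt, prod_insert (hnm hp.2), erase_insert (hnm hp.2)]

lemma IsSF.sum_ite_linked_erase_sub (hT : IsSF 1 T) (hub : u ≠ b) (v : V) :
    ∑ w ∈ univ.filter (fun w => s(u, w) ∈ T),
      ((if Linked (T.erase s(u, w)) w b then 1 else 0) -
        if Linked (T.erase s(u, w)) w v then 1 else 0 : ℝ) =
      if u = v then 1 else 0 := by
  rw [sum_sub_distrib, sum_boole, sum_boole, filter_filter, filter_filter,
    hT.card_filter_linked_erase, hT.card_filter_linked_erase, if_neg (Ne.symm hub)]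
  by_cases huv : u = v <;> simp [huv, eq_comm]

lemma sum_lap_mul_floatWt (c : Sym2 V → ℝ) (hub : u ≠ b) (v : V) :
    ∑ w, lap c u w * floatWt c b w v = if u = v then kappa1 c else 0 := by
  set χ : Finset (Sym2 V) → V → ℝ :=
    fun B x => if x ∈ floating b B ∧ v ∈ floating b B then 1 else 0 with hχ
  set δ : Finset (Sym2 V) → V → ℝ :=
    fun B w => (if Linked B w b then 1 else 0) - if Linked B w v then 1 else 0 with hδ
  calc ∑ w, lap c u w * floatWt c b w v
      = ∑ p ∈ univ.filter (IsSF 2) ×ˢ univ,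
          c s(u, p.2) * wt c p.1 * (χ p.1 u - χ p.1 p.2) := by
        rw [sum_lap_mul, sum_product, sum_comm]
        refine sum_congr rfl fun w _ => ?_
        rw [floatWt, floatWt, ← sum_sub_distrib, mul_sum]
        exact sum_congr rfl fun B _ => by simp only [hχ]; ring
    _ = ∑ p ∈ (univ.filter (IsSF 2) ×ˢ univ).filter (fun p => ¬ Linked p.1 u p.2),
          c s(u, p.2) * wt c p.1 * (χ p.1 u - χ p.1 p.2) := by
        refine (sum_filter_of_ne fun p _ hp => ?_).symm
        intro hl
        simp only [hχ, mem_floating_iff_of_linked hl, sub_self, mul_zero, ne_eq,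
          not_true_eq_false] at hp
    _ = ∑ p ∈ (univ.filter (IsSF 2) ×ˢ univ).filter (fun p => ¬ Linked p.1 u p.2),
          c s(u, p.2) * wt c p.1 * δ p.1 p.2 := by
        refine sum_congr rfl fun p hp => ?_
        simp only [mem_filter, mem_product, mem_univ, true_and, and_true] at hp
        simp only [hχ, hδ, ite_floating_sub_of_not_linked hp.1 hp.2]
    _ = ∑ p ∈ (univ.filter (IsSF 1) ×ˢ univ).filter (fun p => s(u, p.2) ∈ p.1),
          wt c p.1 * δ (p.1.erase s(u, p.2)) p.2 := sum_cross_eq_sum_tree c u δ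
    _ = ∑ T ∈ univ.filter (IsSF 1),
          wt c T * ∑ w ∈ univ.filter (fun w => s(u, w) ∈ T), δ (T.erase s(u, w)) w := by
        rw [sum_filter, sum_product]
        refine sum_congr rfl fun T _ => ?_
        rw [mul_sum, sum_filter]
    _ = ∑ T ∈ univ.filter (IsSF 1), wt c T * if u = v then 1 else 0 :=
        sum_congr rfl fun T hT => by rw [(mem_filter.mp hT).2.sum_ite_linked_erase_sub hub]
    _ = if u = v then kappa1 c else 0 := by
        rw [← sum_mul, ← kappa1, mul_ite, mul_one, mul_zero]

end Green

section Dirichlet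

variable {V : Type*} [Fintype V] [DecidableEq V]

lemma dlap_mul_floatWt (c : Sym2 V → ℝ) (b : V) :
    dlap c b * Matrix.of (fun p q : {w : V // w ≠ b} => floatWt c b p q) = kappa1 c • 1 := by
  ext p q
  have hsub : ∑ w : {w : V // w ≠ b}, lap c p w * floatWt c b w q =
      ∑ w, lap c p w * floatWt c b w q := by
    rw [← sum_erase univ (f := fun w => lap c p w * floatWt c b w q) (a := b)
      (by rw [floatWt_base_left, mul_zero])]
    exact (sum_subtype _ (fun w => by simp) (fun w => lap c p w * floatWt c b w q)).symm
  simp only [Matrix.mul_apply, Matrix.smul_apply, Matrix.one_apply, dlap, Matrix.of_apply,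
    smul_eq_mul, hsub, sum_lap_mul_floatWt c p.2, Subtype.ext_iff, mul_ite, mul_one, mul_zero]

lemma green_eq_floatWt (c : Sym2 V → ℝ) (hk : kappa1 c ≠ 0) (b u v : V) :
    green c b u v = (kappa1 c)⁻¹ * floatWt c b u v := by
  have hinv : (dlap c b)⁻¹ =
      (kappa1 c)⁻¹ • Matrix.of fun p q : {w : V // w ≠ b} => floatWt c b p q :=
    Matrix.inv_eq_right_inv <| by
      rw [Matrix.mul_smul, dlap_mul_floatWt, smul_smul, inv_mul_cancel₀ hk, one_smul]
  unfold green
  split_ifs with hu hv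
  · simp [hu, floatWt_base_left]
  · simp [hv, floatWt_base_right]
  · simp [hinv]

lemma sum_floatWt_self (c : Sym2 V → ℝ) (b : V) :
    ∑ v, floatWt c b v v = ∑ B ∈ univ.filter (IsSF 2), wt c B * (floating b B).card := by
  simp only [floatWt, and_self]
  rw [sum_comm]
  refine sum_congr rfl fun B _ => ?_
  rw [← mul_sum, sum_boole, filter_mem_eq_inter, univ_inter]

lemma kappa1_pos (c : Sym2 V → ℝ) (hc : ∀ e, 0 ≤ c e)
    (hconn : ncomp (univ.filter fun e : Sym2 V => c e ≠ 0) = 1) : 0 < kappa1 c := by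
  obtain ⟨T, hTc, hT⟩ := exists_isSF_one_subset hconn
  refine sum_pos' (fun B _ => prod_nonneg fun e _ => hc e) ⟨T, by simpa using hT, ?_⟩
  exact prod_pos fun e he => (hc e).lt_of_ne (mem_filter.mp (hTc he)).2.symm

end Dirichlet

end TwoSF

open TwoSF

theorem statement_8_general {V : Type*} [Fintype V] [DecidableEq V] (c : Sym2 V → ℝ)
    (hc : ∀ e, 0 ≤ c e)
    (hconn : ncomp (Finset.univ.filter fun e : Sym2 V => c e ≠ 0) = 1)
    (b : V) :
    expPow c b 1 =
      (kappa1 c * ((Fintype.card V : ℝ) - 1) / kappa2 c) *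
        ((Fintype.card V : ℝ) / ((Fintype.card V : ℝ) - 1)) *
        ((∑ v : V, green c b v v) / (Fintype.card V : ℝ)) := by
  have hk : kappa1 c ≠ 0 := (kappa1_pos c hc hconn).ne'
  have htrace : ∑ v, green c b v v = (kappa1 c)⁻¹ *
      ∑ B ∈ Finset.univ.filter (IsSF 2), wt c B * (floating b B).card := by
    simp_rw [green_eq_floatWt c hk, ← Finset.mul_sum, sum_floatWt_self]
  have hn : (Fintype.card V : ℝ) ≠ 0 := by
    exact_mod_cast (Fintype.card_pos_iff.mpr ⟨b⟩).ne'
  rcases eq_or_ne ((Fintype.card V : ℝ) - 1) 0 with h1 | h1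
  · have hno2SF : Finset.univ.filter (IsSF (V := V) 2) = ∅ :=
      Finset.filter_eq_empty_iff.mpr fun B _ hB => by
        have := hB.2
        have : Fintype.card V = 1 := by exact_mod_cast sub_eq_zero.mp h1
        omega
    simp [expPow, hno2SF, h1]
  · rw [expPow, htrace]
    field_simp

/-- For a finite connected undirected graph with positive
conductances and marked vertex `b`, the expected number of vertices of the
floating component satisfies
`E(|Σ|) = ℓ* · (|V|/(|V|-1)) · R`, where `ℓ* = κ(|V|-1)/κ₂` and
`R = (1/|V|) Σ_v G_{v,v}`. -/
theorem statement_8 {V : Type*} [Fintype V] [DecidableEq V] (c : Sym2 V → ℝ)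
    (hc : ∀ e, 0 ≤ c e) (hloop : ∀ v : V, c s(v, v) = 0)
    (hconn : ncomp (Finset.univ.filter fun e : Sym2 V => c e ≠ 0) = 1)
    (b : V) :
    expPow c b 1 =
      (kappa1 c * ((Fintype.card V : ℝ) - 1) / kappa2 c) *
        ((Fintype.card V : ℝ) / ((Fintype.card V : ℝ) - 1)) *
        ((∑ v : V, green c b v v) / (Fintype.card V : ℝ)) :=
  statement_8_general c hc hconn b
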